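/- Fix k ≥ 1. Let P and N be smooth matrix-valued maps on ℝⁿ such that P(x) is skew-symmetric and N(x)P(x) is skew-symmetric for every x, the Nijenhuis torsion of N vanishes identically, and the Magri–Morosi concomitant C(N^{k−1}P, N) (the concomitant of the bivector N^{k−1}P with N) vanishes identically. Then for every index l and every point: Σ_j ∂_j ( (N^k P)^{jl} ) − Σ_i N^l_i Σ_j ∂_j ( (N^{k−1} P)^{ji} ) = −(1/(2k)) Σ_j P^{lj} ∂_j ( Tr(N^k) ). That is, the k-th modular vector field X^{(k)} = X^k_μ − N X^{k−1}_μ (computed with Lebesgue measure) equals −(1/2) H^P_{I_k}, where I_k = Tr(N^k)/k. -/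

import Mathlib

open Matrix BigOperators

/-- Partial derivative in the `l`-th coordinate direction. -/
noncomputable def pd {n : ℕ} (l : Fin n) (f : (Fin n → ℝ) → ℝ) (x : Fin n → ℝ) : ℝ :=
  fderiv ℝ f x (Pi.single l 1)

/-- The Magri–Morosi concomitant `C(Q,N)^{kj}_m` of a bivector `Q` with `N`, in coordinates. -/
noncomputable def MagriMorosi {n : ℕ}
    (Q N : (Fin n → ℝ) → Matrix (Fin n) (Fin n) ℝ)
    (k j m : Fin n) (x : Fin n → ℝ) : ℝ :=
  ∑ l, (Q x l j * pd l (fun y => N y k m) x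
      + Q x k l * pd l (fun y => N y j m) x
      - N x l m * pd l (fun y => Q y k j) x
      + N x j l * pd m (fun y => Q y k l) x
      - Q x l j * pd m (fun y => N y k l) x)

/-- The Nijenhuis torsion of a (1,1)-tensor field `N`, in coordinates. -/
noncomputable def nijenhuisTorsion {n : ℕ}
    (N : (Fin n → ℝ) → Matrix (Fin n) (Fin n) ℝ)
    (k i j : Fin n) (x : Fin n → ℝ) : ℝ :=
  ∑ l, (N x l i * pd l (fun y => N y k j) x
      - N x l j * pd l (fun y => N y k i) x
      - N x k l * (pd i (fun y => N y l j) x - pd j (fun y => N y l i) x))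

section Auxiliary

variable {n : ℕ}

lemma pd_sum {ι : Type*} (s : Finset ι) (f : ι → (Fin n → ℝ) → ℝ) {x : Fin n → ℝ} (l : Fin n)
    (h : ∀ i ∈ s, DifferentiableAt ℝ (f i) x) :
    pd l (fun y => ∑ i ∈ s, f i y) x = ∑ i ∈ s, pd l (f i) x := by
  unfold pd; rw [fderiv_fun_sum h]; simp

lemma pd_mul {f g : (Fin n → ℝ) → ℝ} {x : Fin n → ℝ} (l : Fin n)
    (hf : DifferentiableAt ℝ f x) (hg : DifferentiableAt ℝ g x) :
    pd l (fun y => f y * g y) x = f x * pd l g x + pd l f x * g x := by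
  unfold pd; rw [fderiv_fun_mul hf hg]; simp [mul_comm]

lemma contDiff_pow_entry (N : (Fin n → ℝ) → Matrix (Fin n) (Fin n) ℝ)
    (hN : ∀ i j : Fin n, ContDiff ℝ (⊤ : ℕ∞) (fun x => N x i j)) (p : ℕ) :
    ∀ i j : Fin n, ContDiff ℝ (⊤ : ℕ∞) (fun x => ((N x) ^ p) i j) := by
  induction p with
  | zero =>
    intro i j
    have : (fun x : Fin n → ℝ => ((N x) ^ 0) i j) = fun _ => (1 : Matrix (Fin n) (Fin n) ℝ) i j := by
      funext x; rw [pow_zero]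
    rw [this]; exact contDiff_const
  | succ p ih =>
    intro i j
    have : (fun x : Fin n → ℝ => ((N x) ^ (p+1)) i j)
        = fun x => ∑ c, ((N x) ^ p) i c * N x c j := by
      funext x; rw [pow_succ, Matrix.mul_apply]
    rw [this]
    exact ContDiff.sum (fun c _ => (ih i c).mul (hN c j))

lemma contDiff_powP_entry (N P : (Fin n → ℝ) → Matrix (Fin n) (Fin n) ℝ)
    (hN : ∀ i j : Fin n, ContDiff ℝ (⊤ : ℕ∞) (fun x => N x i j))
    (hP : ∀ i j : Fin n, ContDiff ℝ (⊤ : ℕ∞) (fun x => P x i j)) (p : ℕ) (i j : Fin n) :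
    ContDiff ℝ (⊤ : ℕ∞) (fun x => ((N x) ^ p * P x) i j) := by
  have : (fun x : Fin n → ℝ => ((N x) ^ p * P x) i j)
      = fun x => ∑ c, ((N x) ^ p) i c * P x c j := by
    funext x; rw [Matrix.mul_apply]
  rw [this]
  exact ContDiff.sum (fun c _ => (contDiff_pow_entry N hN p i c).mul (hP c j))

lemma pd_pow_entry (N : (Fin n → ℝ) → Matrix (Fin n) (Fin n) ℝ)
    (hN : ∀ i j : Fin n, ContDiff ℝ (⊤ : ℕ∞) (fun x => N x i j)) (x : Fin n → ℝ) (l : Fin n) (p : ℕ) :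
    ∀ a b : Fin n, pd l (fun y => ((N y) ^ p) a b) x
      = (∑ i ∈ Finset.range p,
          (N x) ^ i * (Matrix.of fun c d => pd l (fun y => N y c d) x) * (N x) ^ (p - 1 - i)) a b := by
  induction p with
  | zero =>
    intro a b
    have : (fun y : Fin n → ℝ => ((N y) ^ 0) a b) = fun _ => (1 : Matrix (Fin n) (Fin n) ℝ) a b := by
      funext y; rw [pow_zero]
    rw [this]
    simp [pd, fderiv_const]
  | succ p ih =>
    intro a b
    have h1 : (fun y : Fin n → ℝ => ((N y) ^ (p+1)) a b)
        = fun y => ∑ c, ((N y) ^ p) a c * N y c b := by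
      funext y; rw [pow_succ, Matrix.mul_apply]
    rw [h1, pd_sum _ (fun c y => ((N y) ^ p) a c * N y c b) l (fun c _ => DifferentiableAt.mul
      (((contDiff_pow_entry N hN p a c).differentiable (by simp)).differentiableAt)
      (((hN c b).differentiable (by simp)).differentiableAt))]
    have h2 : ∀ c : Fin n, pd l (fun y => ((N y) ^ p) a c * N y c b) x
        = ((N x) ^ p) a c * pd l (fun y => N y c b) x
          + pd l (fun y => ((N y) ^ p) a c) x * N x c b := by
      intro c
      exact pd_mul l (((contDiff_pow_entry N hN p a c).differentiable (by simp)).differentiableAt)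
        (((hN c b).differentiable (by simp)).differentiableAt)
    rw [Finset.sum_congr rfl (fun c _ => h2 c)]
    set D : Matrix (Fin n) (Fin n) ℝ := Matrix.of fun c d => pd l (fun y => N y c d) x with hD
    have h3 : ∑ c, (((N x) ^ p) a c * pd l (fun y => N y c b) x
          + pd l (fun y => ((N y) ^ p) a c) x * N x c b)
        = (((N x) ^ p) * D) a b
          + ((∑ i ∈ Finset.range p, (N x) ^ i * D * (N x) ^ (p - 1 - i)) * N x) a b := by
      rw [Finset.sum_add_distrib, Matrix.mul_apply, Matrix.mul_apply]
      congr 1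
      exact Finset.sum_congr rfl (fun c _ => by rw [ih a c])
    rw [h3]
    rw [Finset.sum_range_succ]
    have h4 : (∑ i ∈ Finset.range p, (N x) ^ i * D * (N x) ^ (p - 1 - i)) * N x
        = ∑ i ∈ Finset.range p, (N x) ^ i * D * (N x) ^ (p + 1 - 1 - i) := by
      rw [Finset.sum_mul]
      refine Finset.sum_congr rfl (fun i hi => ?_)
      rw [Finset.mem_range] at hi
      have he : p + 1 - 1 - i = (p - 1 - i) + 1 := by omega
      rw [he, pow_succ, mul_assoc, mul_assoc]
    rw [h4]
    have h5 : (N x) ^ p * D * (N x) ^ (p + 1 - 1 - p) = (N x) ^ p * D := by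
      have : p + 1 - 1 - p = 0 := by omega
      rw [this, pow_zero, mul_one]
    rw [h5, Matrix.add_apply, add_comm]

/-- `Gq q j = Tr(N^q ∂_j N)` in coordinates. -/
noncomputable def Gq (N : (Fin n → ℝ) → Matrix (Fin n) (Fin n) ℝ) (x : Fin n → ℝ)
    (q : ℕ) (j : Fin n) : ℝ :=
  ∑ a, ∑ i, ((N x) ^ q) i a * pd j (fun y => N y a i) x

lemma pd_trace_pow (N : (Fin n → ℝ) → Matrix (Fin n) (Fin n) ℝ)
    (hN : ∀ i j : Fin n, ContDiff ℝ (⊤ : ℕ∞) (fun x => N x i j)) (x : Fin n → ℝ) (l : Fin n) (p : ℕ) :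
    pd l (fun y => ∑ m, ((N y) ^ p) m m) x = (p : ℝ) * Gq N x (p - 1) l := by
  rw [pd_sum _ _ l (fun m _ =>
    ((contDiff_pow_entry N hN p m m).differentiable (by simp)).differentiableAt)]
  set D : Matrix (Fin n) (Fin n) ℝ := Matrix.of fun c d => pd l (fun y => N y c d) x with hD
  have h1 : ∀ m : Fin n, pd l (fun y => ((N y) ^ p) m m) x
      = (∑ i ∈ Finset.range p, (N x) ^ i * D * (N x) ^ (p - 1 - i)) m m :=
    fun m => pd_pow_entry N hN x l p m m
  rw [Finset.sum_congr rfl (fun m _ => h1 m)]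
  have h2 : ∑ m, (∑ i ∈ Finset.range p, (N x) ^ i * D * (N x) ^ (p - 1 - i)) m m
      = Matrix.trace (∑ i ∈ Finset.range p, (N x) ^ i * D * (N x) ^ (p - 1 - i)) := rfl
  rw [h2, Matrix.trace_sum]
  have h3 : ∀ i ∈ Finset.range p,
      Matrix.trace ((N x) ^ i * D * (N x) ^ (p - 1 - i)) = Matrix.trace ((N x) ^ (p-1) * D) := by
    intro i hi
    rw [Finset.mem_range] at hi
    have he : p - 1 - i + i = p - 1 := by omega
    rw [Matrix.trace_mul_comm, ← mul_assoc, ← pow_add, he]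
  rw [Finset.sum_congr rfl h3, Finset.sum_const, Finset.card_range, nsmul_eq_mul]
  congr 1
  rw [Gq, Matrix.trace]
  simp only [Matrix.diag, Matrix.mul_apply, Matrix.of_apply]
  rw [Finset.sum_comm]
  rfl

lemma torsion_contract (N : (Fin n → ℝ) → Matrix (Fin n) (Fin n) ℝ)
    (hT : ∀ (a i j : Fin n) (x : Fin n → ℝ), nijenhuisTorsion N a i j x = 0)
    (q : ℕ) (j : Fin n) (x : Fin n → ℝ) :
    ∑ l, N x l j * Gq N x q l = Gq N x (q + 1) j := by
  have h0 : ∑ a, ∑ i, ((N x) ^ q) i a * nijenhuisTorsion N a i j x = 0 := by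
    simp [hT]
  simp only [nijenhuisTorsion, Finset.mul_sum, mul_sub,
    Finset.sum_sub_distrib] at h0
  set TA := ∑ a, ∑ i, ∑ l, ((N x) ^ q) i a * (N x l i * pd l (fun y => N y a j) x) with hTA
  set TB := ∑ a, ∑ i, ∑ l, ((N x) ^ q) i a * (N x l j * pd l (fun y => N y a i) x) with hTB
  set TC := ∑ a, ∑ i, ∑ l, ((N x) ^ q) i a * (N x a l * pd i (fun y => N y l j) x) with hTC
  set TD := ∑ a, ∑ i, ∑ l, ((N x) ^ q) i a * (N x a l * pd j (fun y => N y l i) x) with hTD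
  have hA : TA = ∑ a, ∑ l, ((N x) ^ (q + 1)) l a * pd l (fun y => N y a j) x := by
    rw [hTA]
    refine Finset.sum_congr rfl (fun a _ => ?_)
    rw [Finset.sum_comm]
    refine Finset.sum_congr rfl (fun l _ => ?_)
    rw [pow_succ', Matrix.mul_apply, Finset.sum_mul]
    refine Finset.sum_congr rfl (fun i _ => by ring)
  have hC : TC = ∑ a, ∑ l, ((N x) ^ (q + 1)) l a * pd l (fun y => N y a j) x := by
    rw [hTC, Finset.sum_comm]
    have step : ∀ i : Fin n, ∑ a, ∑ l, ((N x) ^ q) i a * (N x a l * pd i (fun y => N y l j) x)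
        = ∑ l, ((N x) ^ (q + 1)) i l * pd i (fun y => N y l j) x := by
      intro i
      rw [Finset.sum_comm]
      refine Finset.sum_congr rfl (fun l _ => ?_)
      rw [pow_succ, Matrix.mul_apply, Finset.sum_mul]
      exact Finset.sum_congr rfl (fun a _ => by ring)
    rw [Finset.sum_congr rfl (fun i _ => step i), Finset.sum_comm]
  have hB : TB = ∑ l, N x l j * Gq N x q l := by
    rw [hTB]
    have swap : ∀ a : Fin n, (∑ i, ∑ l, ((N x) ^ q) i a * (N x l j * pd l (fun y => N y a i) x))
        = ∑ l, ∑ i, ((N x) ^ q) i a * (N x l j * pd l (fun y => N y a i) x) :=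
      fun a => Finset.sum_comm
    rw [Finset.sum_congr rfl (fun a _ => swap a), Finset.sum_comm]
    refine Finset.sum_congr rfl (fun l _ => ?_)
    rw [Gq, Finset.mul_sum]
    refine Finset.sum_congr rfl (fun a _ => ?_)
    rw [Finset.mul_sum]
    exact Finset.sum_congr rfl (fun i _ => by ring)
  have hD : TD = Gq N x (q + 1) j := by
    rw [hTD, Finset.sum_comm]
    have step : ∀ i : Fin n, ∑ a, ∑ l, ((N x) ^ q) i a * (N x a l * pd j (fun y => N y l i) x)
        = ∑ l, ((N x) ^ (q + 1)) i l * pd j (fun y => N y l i) x := by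
      intro i
      rw [Finset.sum_comm]
      refine Finset.sum_congr rfl (fun l _ => ?_)
      rw [pow_succ, Matrix.mul_apply, Finset.sum_mul]
      exact Finset.sum_congr rfl (fun a _ => by ring)
    rw [Finset.sum_congr rfl (fun i _ => step i), Finset.sum_comm, Gq]
  linarith [h0, hA, hC, hB, hD]

lemma master (N : (Fin n → ℝ) → Matrix (Fin n) (Fin n) ℝ)
    (hT : ∀ (a i j : Fin n) (x : Fin n → ℝ), nijenhuisTorsion N a i j x = 0)
    (q : ℕ) (j : Fin n) (x : Fin n → ℝ) :
    ∑ l, ((N x) ^ q) l j * Gq N x 0 l = Gq N x q j := by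
  induction q generalizing j with
  | zero => simp [Matrix.one_apply]
  | succ q ih =>
    have h1 : ∀ l : Fin n, ((N x) ^ (q + 1)) l j = ∑ a, ((N x) ^ q) l a * N x a j := by
      intro l; rw [pow_succ, Matrix.mul_apply]
    calc ∑ l, ((N x) ^ (q + 1)) l j * Gq N x 0 l
        = ∑ l, ∑ a, ((N x) ^ q) l a * N x a j * Gq N x 0 l := by
          refine Finset.sum_congr rfl (fun l _ => ?_); rw [h1, Finset.sum_mul]
      _ = ∑ a, N x a j * ∑ l, ((N x) ^ q) l a * Gq N x 0 l := by
          rw [Finset.sum_comm]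
          refine Finset.sum_congr rfl (fun a _ => ?_)
          rw [Finset.mul_sum]
          exact Finset.sum_congr rfl (fun l _ => by ring)
      _ = ∑ a, N x a j * Gq N x q a := by
          exact Finset.sum_congr rfl (fun a _ => by rw [ih a])
      _ = Gq N x (q + 1) j := torsion_contract N hT q j x

lemma skew_pow_comm (M Pm : Matrix (Fin n) (Fin n) ℝ) (hP : Pmᵀ = -Pm)
    (hNP : (M * Pm)ᵀ = -(M * Pm)) (p : ℕ) : M ^ p * Pm = Pm * (Mᵀ) ^ p := by
  have base : M * Pm = Pm * Mᵀ := by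
    have h1 : (M * Pm)ᵀ = -(Pm * Mᵀ) := by
      rw [Matrix.transpose_mul, hP, neg_mul]
    have := hNP.symm.trans h1
    exact neg_injective this
  induction p with
  | zero => simp
  | succ p ih =>
    rw [pow_succ', mul_assoc, ih, ← mul_assoc, base, mul_assoc, ← pow_succ']

lemma skew_powP (M Pm : Matrix (Fin n) (Fin n) ℝ) (hP : Pmᵀ = -Pm)
    (hNP : (M * Pm)ᵀ = -(M * Pm)) (p : ℕ) : (M ^ p * Pm)ᵀ = -(M ^ p * Pm) := by
  rw [skew_pow_comm M Pm hP hNP p, Matrix.transpose_mul, Matrix.transpose_pow,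
    Matrix.transpose_transpose, hP, mul_neg, ← skew_pow_comm M Pm hP hNP p]

lemma powP_entry (M Pm : Matrix (Fin n) (Fin n) ℝ) (hP : Pmᵀ = -Pm)
    (hNP : (M * Pm)ᵀ = -(M * Pm)) (p : ℕ) (a b : Fin n) :
    (M ^ p * Pm) a b = ∑ c, Pm a c * (M ^ p) b c := by
  rw [skew_pow_comm M Pm hP hNP p, Matrix.mul_apply]
  exact Finset.sum_congr rfl fun c _ => by rw [← Matrix.transpose_pow]; rfl

end Auxiliary

theorem kth_modular_vector_field
    {n : ℕ} (hn : 1 ≤ n)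
    (k : ℕ) (hk : 1 ≤ k)
    (P N : (Fin n → ℝ) → Matrix (Fin n) (Fin n) ℝ)
    (hP : ∀ i j : Fin n, ContDiff ℝ (⊤ : ℕ∞) (fun x => P x i j))
    (hN : ∀ i j : Fin n, ContDiff ℝ (⊤ : ℕ∞) (fun x => N x i j))
    (hskewP : ∀ x, (P x)ᵀ = -(P x))
    (hskewNP : ∀ x, (N x * P x)ᵀ = -(N x * P x))
    (hT : ∀ (a i j : Fin n) (x : Fin n → ℝ), nijenhuisTorsion N a i j x = 0)
    (hC : ∀ (a j m : Fin n) (x : Fin n → ℝ),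
      MagriMorosi (fun y => (N y) ^ (k - 1) * P y) N a j m x = 0) :
    ∀ (l : Fin n) (x : Fin n → ℝ),
      ∑ j, pd j (fun y => ((N y) ^ k * P y) j l) x
        - ∑ i, N x l i * ∑ j, pd j (fun y => ((N y) ^ (k - 1) * P y) j i) x
        = -(1 / (2 * (k : ℝ))) * ∑ j, P x l j * pd j (fun y => ∑ m, ((N y) ^ k) m m) x := by
  obtain ⟨m, rfl⟩ : ∃ m, k = m + 1 := ⟨k - 1, (Nat.succ_pred_eq_of_pos hk).symm⟩
  simp only [Nat.add_sub_cancel] at hC ⊢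
  intro L x
  have hNd : ∀ (a b : Fin n) (x' : Fin n → ℝ), DifferentiableAt ℝ (fun y => N y a b) x' :=
    fun a b x' => ((hN a b).differentiable (by simp)).differentiableAt
  have hQd : ∀ (a b : Fin n) (x' : Fin n → ℝ),
      DifferentiableAt ℝ (fun y => ((N y) ^ m * P y) a b) x' :=
    fun a b x' => ((contDiff_powP_entry N P hN hP m a b).differentiable (by simp)).differentiableAt
  have hskewQ : ∀ (x' : Fin n → ℝ) (a b : Fin n),
      ((N x') ^ m * P x') a b = -(((N x') ^ m * P x') b a) := by
    intro x' a b
    have := skew_powP (N x') (P x') (hskewP x') (hskewNP x') m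
    have h2 := congrFun (congrFun this b) a
    simp only [Matrix.transpose_apply, Matrix.neg_apply] at h2
    linarith
  -- the two contractions of the vanishing concomitant
  have h0 : ∑ j, MagriMorosi (fun y => (N y) ^ m * P y) N L j j x = 0 := by simp [hC]
  have h1 : ∑ a, MagriMorosi (fun y => (N y) ^ m * P y) N a L a x = 0 := by simp [hC]
  simp only [MagriMorosi, Finset.sum_add_distrib, Finset.sum_sub_distrib] at h0 h1
  set A1 := ∑ j, ∑ l, ((N x) ^ m * P x) l j * pd l (fun y => N y L j) x with hA1d
  set A2 := ∑ j, ∑ l, ((N x) ^ m * P x) L l * pd l (fun y => N y j j) x with hA2d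
  set A3 := ∑ j, ∑ l, N x l j * pd l (fun y => ((N y) ^ m * P y) L j) x with hA3d
  set A4 := ∑ j, ∑ l, N x j l * pd j (fun y => ((N y) ^ m * P y) L l) x with hA4d
  set A5 := ∑ j, ∑ l, ((N x) ^ m * P x) l j * pd j (fun y => N y L l) x with hA5d
  set B1 := ∑ a, ∑ l, ((N x) ^ m * P x) l L * pd l (fun y => N y a a) x with hB1d
  set B2 := ∑ a, ∑ l, ((N x) ^ m * P x) a l * pd l (fun y => N y L a) x with hB2d
  set B3 := ∑ a, ∑ l, N x l a * pd l (fun y => ((N y) ^ m * P y) a L) x with hB3d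
  set B4 := ∑ a, ∑ l, N x L l * pd a (fun y => ((N y) ^ m * P y) a l) x with hB4d
  set B5 := ∑ a, ∑ l, ((N x) ^ m * P x) l L * pd a (fun y => N y a l) x with hB5d
  have hA5 : A5 = -A1 := by
    have c1 : A5 = ∑ j, ∑ l, ((N x) ^ m * P x) j l * pd l (fun y => N y L j) x := by
      rw [hA5d]; exact Finset.sum_comm
    rw [c1, hA1d, ← Finset.sum_neg_distrib]
    refine Finset.sum_congr rfl (fun j _ => ?_)
    rw [← Finset.sum_neg_distrib]
    refine Finset.sum_congr rfl (fun l _ => ?_)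
    rw [hskewQ x j l]; ring
  have hA4 : A4 = A3 := by rw [hA4d, hA3d]; exact Finset.sum_comm
  have hB1 : B1 = -A2 := by
    rw [hB1d, hA2d, ← Finset.sum_neg_distrib]
    refine Finset.sum_congr rfl (fun a _ => ?_)
    rw [← Finset.sum_neg_distrib]
    refine Finset.sum_congr rfl (fun l _ => ?_)
    rw [hskewQ x l L]; ring
  have hB2 : B2 = -A1 := by
    rw [hB2d, hA1d, ← Finset.sum_neg_distrib]
    refine Finset.sum_congr rfl (fun a _ => ?_)
    rw [← Finset.sum_neg_distrib]
    refine Finset.sum_congr rfl (fun l _ => ?_)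
    rw [hskewQ x a l]; ring
  -- expand the goal's first sum
  have expand1 : ∀ j : Fin n,
      pd j (fun y => ((N y) ^ (m + 1) * P y) j L) x
        = ∑ c, (N x j c * pd j (fun y => ((N y) ^ m * P y) c L) x
            + pd j (fun y => N y j c) x * ((N x) ^ m * P x) c L) := by
    intro j
    have hfun : (fun y => ((N y) ^ (m + 1) * P y) j L)
        = fun y => ∑ c, N y j c * ((N y) ^ m * P y) c L := by
      funext y
      rw [pow_succ', mul_assoc, Matrix.mul_apply]
    rw [hfun, pd_sum _ (fun c y => N y j c * ((N y) ^ m * P y) c L) j (fun c _ => (hNd j c x).mul (hQd c L x))]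
    exact Finset.sum_congr rfl (fun c _ => pd_mul j (hNd j c x) (hQd c L x))
  have hfirst : ∑ j, pd j (fun y => ((N y) ^ (m + 1) * P y) j L) x = B3 + B5 := by
    rw [Finset.sum_congr rfl (fun j _ => expand1 j)]
    rw [Finset.sum_congr rfl (fun j (_ : j ∈ Finset.univ) => Finset.sum_add_distrib)]
    rw [Finset.sum_add_distrib]
    congr 1
    · rw [hB3d, Finset.sum_comm]
    · rw [hB5d]
      refine Finset.sum_congr rfl (fun j _ => ?_)
      exact Finset.sum_congr rfl (fun c _ => by ring)
  have hsec : ∑ i, N x L i * ∑ j, pd j (fun y => ((N y) ^ m * P y) j i) x = B4 := by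
    rw [hB4d, Finset.sum_comm]
    exact Finset.sum_congr rfl (fun i _ => (Finset.mul_sum _ _ _))
  -- identify A2 with the master expression
  have hG0 : ∀ l : Fin n, Gq N x 0 l = ∑ a, pd l (fun y => N y a a) x := by
    intro l
    rw [Gq]
    refine Finset.sum_congr rfl (fun a _ => ?_)
    rw [pow_zero]
    simp [Matrix.one_apply]
  have hA2G : A2 = ∑ c, P x L c * Gq N x m c := by
    rw [hA2d, Finset.sum_comm]
    have step1 : ∀ l : Fin n, ∑ j, ((N x) ^ m * P x) L l * pd l (fun y => N y j j) x
        = ((N x) ^ m * P x) L l * Gq N x 0 l := by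
      intro l
      rw [hG0 l, Finset.mul_sum]
    rw [Finset.sum_congr rfl (fun l _ => step1 l)]
    have step2 : ∀ l : Fin n, ((N x) ^ m * P x) L l * Gq N x 0 l
        = ∑ c, P x L c * ((N x) ^ m) l c * Gq N x 0 l := by
      intro l
      rw [powP_entry (N x) (P x) (hskewP x) (hskewNP x) m L l, Finset.sum_mul]
    rw [Finset.sum_congr rfl (fun l _ => step2 l), Finset.sum_comm]
    refine Finset.sum_congr rfl (fun c _ => ?_)
    rw [← master N hT m c x, Finset.mul_sum]
    exact Finset.sum_congr rfl (fun l _ => by ring)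
  -- rewrite the right-hand side using the trace derivative
  have htr : ∀ j : Fin n, pd j (fun y => ∑ mm, ((N y) ^ (m + 1)) mm mm) x
      = ((m : ℝ) + 1) * Gq N x m j := by
    intro j
    have := pd_trace_pow N hN x j (m + 1)
    simpa [Nat.add_sub_cancel] using this
  have hrhs : -(1 / (2 * ((m : ℝ) + 1))) * ∑ j, P x L j * pd j (fun y => ∑ mm, ((N y) ^ (m + 1)) mm mm) x
      = -(1 / 2) * A2 := by
    rw [Finset.sum_congr rfl (fun j _ => by rw [htr j])]
    rw [hA2G, Finset.mul_sum, Finset.mul_sum]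
    refine Finset.sum_congr rfl (fun c _ => ?_)
    have hm1 : (m : ℝ) + 1 ≠ 0 := by positivity
    field_simp
  -- put everything together
  have key : ∑ j, pd j (fun y => ((N y) ^ (m + 1) * P y) j L) x
      - ∑ i, N x L i * ∑ j, pd j (fun y => ((N y) ^ m * P y) j i) x
      = -(1 / 2) * A2 := by
    rw [hfirst, hsec]
    linarith [h0, h1, hA5, hA4, hB1, hB2]
  rw [key, ← hrhs]
  push_cast
  ring_nf
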